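/- arXiv:1509.03383 — 2 statements merged into one kernel-verified Lean document; each statement's English description precedes it below -/
import Mathlib

section
/- Let L be a left ideal of A* containing A^k. Then τ_L is a right congruence on A^k (with respect to the action u.a = suffix of length k of ua) if and only if L is a two-sided ideal of A*, if and only if the set of suffix-minimal elements Lβ_ℓ is a semaphore code. -/
/-- `ξ_k`: the suffix of length `k` of `w` (or `w` itself if it is shorter). -/
def xiK {A : Type*} (k : ℕ) (w : List A) : List A := w.drop (w.length - k)

/-- The relation `τ_L`: `u` and `v` have a common suffix in `L`. -/
def tauRel {A : Type*} (L : Set (List A)) (u v : List A) : Prop :=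
  ∃ w ∈ L, w <:+ u ∧ w <:+ v

/-- A suffix code: an antichain with respect to the suffix order. -/
def SuffixCode {A : Type*} (S : Set (List A)) : Prop :=
  ∀ u ∈ S, ∀ v ∈ S, u <:+ v → u = v

/-- A semaphore code: a suffix code `S` with `S A ⊆ A* S`. -/
def IsSemaphore {A : Type*} (S : Set (List A)) : Prop :=
  SuffixCode S ∧ ∀ s ∈ S, ∀ a : A, ∃ t ∈ S, t <:+ s ++ [a]

/-- `L βℓ`: the suffix-minimal elements of `L`. -/
def suffMin {A : Type*} (L : Set (List A)) : Set (List A) :=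
  {w ∈ L | ∀ v ∈ L, v <:+ w → v = w}

/-! The implications all go through "`L` is closed under appending a letter on the right",
which for a left ideal is the same as being two-sided.

* If `τ_L` is a right congruence and `w ∈ L` is shorter than `k`, pad `w` on the left to
  length `k` once with a letter `b` and once with a letter `c ≠ b`.  The two padded words are
  `τ_L`-related through `w`, so after reading `a` they share a suffix in `L`; as they differ
  in every position before `w a`, that suffix is a suffix of `w a`, whence `w a ∈ L`.
  Conversely, if `L` is two-sided, a common suffix `w ∈ L` of `u` and `v` yields the common
  suffix `ξ_k (w a) ∈ L` of `u.a` and `v.a`.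
* Every word of `L` has a suffix in `L βℓ`, and `L βℓ` is always a suffix code.  So
  `(L βℓ) A ⊆ A* (L βℓ)` says exactly that `w a` has a suffix in `L` for every `w ∈ L`. -/

section

variable {A : Type*} {L : Set (List A)}

lemma List.IsSuffix.xiK {s t : List A} (h : s <:+ t) (k : ℕ) : xiK k s <:+ xiK k t :=
  List.suffix_of_suffix_length_le ((List.drop_suffix _ _).trans h) (List.drop_suffix _ _)
    (by simp only [_root_.xiK, List.length_drop]; have := h.length_le; omega)

lemma xiK_cons_of_length_eq {k : ℕ} (d : A) {y : List A} (hy : y.length = k) :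
    xiK k (d :: y) = y := by
  simp [xiK, hy]

lemma suffix_of_suffix_replicate_append {b c : A} (hbc : b ≠ c) {m n : ℕ} {t z : List A}
    (hb : t <:+ List.replicate m b ++ z) (hc : t <:+ List.replicate n c ++ z) : t <:+ z := by
  rcases le_or_gt t.length z.length with hle | hlt
  · exact List.suffix_of_suffix_length_le hb (List.suffix_append _ _) hle
  obtain ⟨t₀, rfl⟩ := List.suffix_of_suffix_length_le (List.suffix_append _ _) hb hlt.le
  obtain ⟨x, hx⟩ : ∃ x, x ∈ t₀ := List.exists_mem_of_length_pos (by simp at hlt; omega)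
  have hxb := List.eq_of_mem_replicate ((List.suffix_append_self_iff.1 hb).sublist.subset hx)
  have hxc := List.eq_of_mem_replicate ((List.suffix_append_self_iff.1 hc).sublist.subset hx)
  exact absurd (hxb.symm.trans hxc) hbc

lemma mem_of_suffix_mem (hL : ∀ u w : List A, w ∈ L → u ++ w ∈ L) {t x : List A}
    (ht : t ∈ L) (htx : t <:+ x) : x ∈ L := by
  obtain ⟨p, rfl⟩ := htx
  exact hL p t ht

lemma xiK_mem {k : ℕ} (hLk : ∀ w : List A, w.length = k → w ∈ L) {x : List A} (hx : x ∈ L) :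
    xiK k x ∈ L := by
  rcases le_or_gt x.length k with hle | hlt
  · simpa [xiK, Nat.sub_eq_zero_of_le hle] using hx
  · exact hLk _ (by simp [xiK]; omega)

lemma twoSided_of_append_singleton_mem (hL : ∀ u w : List A, w ∈ L → u ++ w ∈ L)
    (hstep : ∀ w ∈ L, ∀ a : A, w ++ [a] ∈ L) :
    ∀ u v w : List A, w ∈ L → u ++ w ++ v ∈ L := by
  have hright : ∀ v w : List A, w ∈ L → w ++ v ∈ L := by
    intro v
    induction v using List.reverseRecOn with
    | nil => simp
    | append_singleton v a ih =>
      intro w hw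
      rw [← List.append_assoc]
      exact hstep _ (ih w hw) a
  intro u v w hw
  rw [List.append_assoc]
  exact hL u _ (hright v w hw)

lemma tauRel_equivalence {k : ℕ} (hLk : ∀ w : List A, w.length = k → w ∈ L) :
    Equivalence (fun u v : {w : List A // w.length = k} => tauRel L u.val v.val) where
  refl u := ⟨u.val, hLk _ u.prop, List.suffix_rfl, List.suffix_rfl⟩
  symm := fun ⟨w, hw, hu, hv⟩ => ⟨w, hw, hv, hu⟩
  trans := fun ⟨w₁, hw₁, hu₁, hv₁⟩ ⟨w₂, hw₂, hv₂, ht₂⟩ =>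
    (List.suffix_or_suffix_of_suffix hv₁ hv₂).elim
      (fun h => ⟨w₁, hw₁, hu₁, h.trans ht₂⟩) (fun h => ⟨w₂, hw₂, h.trans hu₁, ht₂⟩)

lemma tauRel_xiK_append_of_twoSided {k : ℕ} (hLk : ∀ w : List A, w.length = k → w ∈ L)
    (hL₂ : ∀ u v w : List A, w ∈ L → u ++ w ++ v ∈ L) {u v : List A} (huv : tauRel L u v)
    (a : A) : tauRel L (xiK k (u ++ [a])) (xiK k (v ++ [a])) := by
  obtain ⟨w, hw, hwu, hwv⟩ := huv
  have hwa : w ++ [a] ∈ L := by simpa using hL₂ [] [a] w hw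
  exact ⟨xiK k (w ++ [a]), xiK_mem hLk hwa,
    (List.suffix_append_self_iff.2 hwu).xiK k, (List.suffix_append_self_iff.2 hwv).xiK k⟩

lemma append_singleton_mem_of_rightCongruence [Nontrivial A] {k : ℕ}
    (hL : ∀ u w : List A, w ∈ L → u ++ w ∈ L) (hLk : ∀ w : List A, w.length = k → w ∈ L)
    (hcong : ∀ u v : List A, u.length = k → v.length = k → tauRel L u v →
      ∀ a : A, tauRel L (xiK k (u ++ [a])) (xiK k (v ++ [a])))
    {w : List A} (hw : w ∈ L) (a : A) : w ++ [a] ∈ L := by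
  rcases le_or_gt k w.length with hle | hlt
  · exact mem_of_suffix_mem hL (hLk (xiK k (w ++ [a])) (by simp [xiK]; omega))
      (List.drop_suffix _ _)
  obtain ⟨n, hn⟩ : ∃ n, k = n + 1 + w.length := ⟨k - w.length - 1, by omega⟩
  obtain ⟨b, c, hbc⟩ := exists_pair_ne A
  have padded : ∀ d : A, xiK k (List.replicate (n + 1) d ++ w ++ [a]) =
      List.replicate n d ++ (w ++ [a]) := fun d => by
    rw [List.replicate_succ, List.cons_append, List.cons_append, List.append_assoc,
      xiK_cons_of_length_eq d (by simp; omega)]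
  have hpad := hcong (List.replicate (n + 1) b ++ w) (List.replicate (n + 1) c ++ w)
    (by simp; omega) (by simp; omega) ⟨w, hw, List.suffix_append _ _, List.suffix_append _ _⟩ a
  rw [padded, padded] at hpad
  obtain ⟨t, ht, htb, htc⟩ := hpad
  exact mem_of_suffix_mem hL ht (suffix_of_suffix_replicate_append hbc htb htc)

lemma suffixCode_suffMin : SuffixCode (suffMin L) :=
  fun _ hu _ hv huv => hv.2 _ hu.1 huv

lemma exists_suffMin_suffix {w : List A} (hw : w ∈ L) : ∃ t ∈ suffMin L, t <:+ w := by
  obtain ⟨t, ⟨htL, htw⟩, hmin⟩ :=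
    (measure List.length).wf.has_min {t | t ∈ L ∧ t <:+ w} ⟨w, hw, List.suffix_rfl⟩
  refine ⟨t, ⟨htL, fun v hv hvt => hvt.eq_of_length_le ?_⟩, htw⟩
  exact not_lt.1 (hmin v ⟨hv, hvt.trans htw⟩)

lemma isSemaphore_suffMin_of_twoSided (hL₂ : ∀ u v w : List A, w ∈ L → u ++ w ++ v ∈ L) :
    IsSemaphore (suffMin L) :=
  ⟨suffixCode_suffMin, fun s hs a => exists_suffMin_suffix (by simpa using hL₂ [] [a] s hs.1)⟩

lemma append_singleton_mem_of_isSemaphore (hL : ∀ u w : List A, w ∈ L → u ++ w ∈ L)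
    (hsem : IsSemaphore (suffMin L)) {w : List A} (hw : w ∈ L) (a : A) : w ++ [a] ∈ L := by
  obtain ⟨s, hs, hsw⟩ := exists_suffMin_suffix hw
  obtain ⟨t, ht, hts⟩ := hsem.2 s hs a
  exact mem_of_suffix_mem hL ht.1 (hts.trans (List.suffix_append_self_iff.2 hsw))

end

theorem tauRel_rightCongruence_iff_general {A : Type*} [Fintype A] (hA : 1 < Fintype.card A)
    (k : ℕ) (L : Set (List A))
    (hL : ∀ u w : List A, w ∈ L → u ++ w ∈ L)
    (hLk : ∀ w : List A, w.length = k → w ∈ L) :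
    ((Equivalence (fun u v : {w : List A // w.length = k} => tauRel L u.val v.val) ∧
        ∀ u v : List A, u.length = k → v.length = k → tauRel L u v →
          ∀ a : A, tauRel L (xiK k (u ++ [a])) (xiK k (v ++ [a]))) ↔
      (∀ u v w : List A, w ∈ L → u ++ w ++ v ∈ L)) ∧
    ((∀ u v w : List A, w ∈ L → u ++ w ++ v ∈ L) ↔ IsSemaphore (suffMin L)) := by
  have : Nontrivial A := Fintype.one_lt_card_iff_nontrivial.1 hA
  refine ⟨⟨fun ⟨_, hcong⟩ => ?_, fun hL₂ => ?_⟩, ⟨isSemaphore_suffMin_of_twoSided, fun hsem => ?_⟩⟩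
  · exact twoSided_of_append_singleton_mem hL fun w hw =>
      append_singleton_mem_of_rightCongruence hL hLk hcong hw
  · exact ⟨tauRel_equivalence hLk, fun u v _ _ huv => tauRel_xiK_append_of_twoSided hLk hL₂ huv⟩
  · exact twoSided_of_append_singleton_mem hL fun w hw =>
      append_singleton_mem_of_isSemaphore hL hsem hw

/-- let `L` be a left ideal of `A*` containing `A^k`.  Then `τ_L` is a
right congruence on `A^k` (for the action `u.a = ξ_k (u a)`) iff `L` is a two-sided
ideal of `A*`, iff the set of suffix-minimal elements `L βℓ` is a semaphore code. -/
theorem tauRel_rightCongruence_iff {A : Type*} [Fintype A] (hA : 1 < Fintype.card A)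
    (k : ℕ) (hk : 1 ≤ k) (L : Set (List A))
    (hL : ∀ u w : List A, w ∈ L → u ++ w ∈ L)
    (hLne : L.Nonempty)
    (hLk : ∀ w : List A, w.length = k → w ∈ L) :
    ((Equivalence (fun u v : {w : List A // w.length = k} => tauRel L u.val v.val) ∧
        ∀ u v : List A, u.length = k → v.length = k → tauRel L u v →
          ∀ a : A, tauRel L (xiK k (u ++ [a])) (xiK k (v ++ [a]))) ↔
      (∀ u v w : List A, w ∈ L → u ++ w ++ v ∈ L)) ∧
    ((∀ u v w : List A, w ∈ L → u ++ w ++ v ∈ L) ↔ IsSemaphore (suffMin L)) :=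
  tauRel_rightCongruence_iff_general hA k L hL hLk
end

section
/- For any right congruence ρ on A^k, the sets A*Λ_ρ and A*Λ'_ρ coincide and are two-sided ideals of A* containing A^k, where Λ_ρ = {lcs(C) : C ∈ A^k/ρ} and Λ'_ρ = {lcs(u,v) : (u,v) ∈ ρ}. -/
/-- Words of length `k` over `A`. -/
abbrev Word (A : Type*) (k : ℕ) := {w : List A // w.length = k}

/-- The shift action of a letter: `u.a` is the suffix of length `k` of `u a`. -/
def act {A : Type*} (k : ℕ) (a : A) (u : Word A k) : Word A k :=
  ⟨(u.val ++ [a]).drop ((u.val ++ [a]).length - k), by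
    have h := u.2
    simp only [List.length_drop, List.length_append, List.length_cons,
      List.length_nil, h]
    omega⟩

/-- A right congruence on `A^k`. -/
def IsRC {A : Type*} (k : ℕ) (r : Word A k → Word A k → Prop) : Prop :=
  Equivalence r ∧ ∀ u v : Word A k, r u v → ∀ a : A, r (act k a u) (act k a v)

/-- `w` is the longest common suffix of `u` and `v`. -/
def IsLcs {A : Type*} (u v w : List A) : Prop :=
  w <:+ u ∧ w <:+ v ∧ ∀ w' : List A, w' <:+ u → w' <:+ v → w' <:+ w

/-- `w` is the longest common suffix of the `ρ`-class of `u`. -/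
def IsLcsClass {A : Type*} {k : ℕ} (ρ : Word A k → Word A k → Prop)
    (u : Word A k) (w : List A) : Prop :=
  (∀ v : Word A k, ρ u v → w <:+ v.val) ∧
    ∀ w' : List A, (∀ v : Word A k, ρ u v → w' <:+ v.val) → w' <:+ w

/-- `Λ_ρ = { lcs(C) : C ∈ A^k/ρ }`. -/
def Lam {A : Type*} {k : ℕ} (ρ : Word A k → Word A k → Prop) : Set (List A) :=
  {w | ∃ u : Word A k, IsLcsClass ρ u w}

/-- `Λ'_ρ = { lcs(u,v) : (u,v) ∈ ρ }`. -/
def Lam' {A : Type*} {k : ℕ} (ρ : Word A k → Word A k → Prop) : Set (List A) :=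
  {w | ∃ u v : Word A k, ρ u v ∧ IsLcs u.val v.val w}

/-- `A* X`. -/
def starMul {A : Type*} (X : Set (List A)) : Set (List A) :=
  {w | ∃ u : List A, ∃ x ∈ X, w = u ++ x}

/-!
Since `A*X` is the set of words having a suffix in `X`, everything reduces to comparing
suffixes. All common suffixes of a class lie on the suffix chain of any one member `u`, so the
class lcs is the lcs of `u` with a class member `v` minimising `|lcs(u, v)|`; conversely
`lcs(u, v)` for `u ρ v` has `lcs([u])` as a suffix. This gives `A*Λ_ρ = A*Λ'_ρ`.
Closure under left multiplication is immediate; for the right, if `x = lcs([u])` then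
`lcs([u.a])` is a suffix of `x a`, because `v ↦ v.a` maps `[u]` into `[u.a]` and every
`v.a` is a suffix of `v a`.
-/

namespace List

variable {α : Type*}

theorem exists_longest_suffix (l : List α) (P : List α → Prop) (hP : P []) :
    ∃ x, x <:+ l ∧ P x ∧ ∀ w, w <:+ l → P w → w <:+ x := by
  have hfin : {w | w <:+ l ∧ P w}.Finite :=
    l.tails.finite_toSet.subset fun w hw => (mem_tails w l).2 hw.1
  obtain ⟨x, ⟨hxl, hx⟩, hmax⟩ := Set.exists_max_image _ length hfin ⟨[], nil_suffix, hP⟩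
  exact ⟨x, hxl, hx, fun w hwl hw => suffix_of_suffix_length_le hwl hxl (hmax w ⟨hwl, hw⟩)⟩

end List

section starMul

open List

variable {A : Type*} {X Y : Set (List A)} {w : List A}

theorem mem_starMul : w ∈ starMul X ↔ ∃ x ∈ X, x <:+ w := by
  constructor
  · rintro ⟨u, x, hx, rfl⟩
    exact ⟨x, hx, suffix_append u x⟩
  · rintro ⟨x, hx, u, rfl⟩
    exact ⟨u, x, hx, rfl⟩

theorem starMul_subset_starMul (h : ∀ x ∈ X, ∃ y ∈ Y, y <:+ x) :
    starMul X ⊆ starMul Y := by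
  intro w hw
  obtain ⟨x, hx, hxw⟩ := mem_starMul.1 hw
  obtain ⟨y, hy, hyx⟩ := h x hx
  exact mem_starMul.2 ⟨y, hy, hyx.trans hxw⟩

theorem append_mem_starMul_left (u : List A) (hw : w ∈ starMul X) : u ++ w ∈ starMul X := by
  obtain ⟨x, hx, hxw⟩ := mem_starMul.1 hw
  exact mem_starMul.2 ⟨x, hx, hxw.trans (suffix_append u w)⟩

theorem append_mem_starMul_right (hX : ∀ x ∈ X, ∀ a, ∃ y ∈ X, y <:+ x ++ [a]) (v : List A)
    (hw : w ∈ starMul X) : w ++ v ∈ starMul X := by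
  induction v generalizing w with
  | nil => simpa using hw
  | cons a v ih =>
    obtain ⟨x, hx, hxw⟩ := mem_starMul.1 hw
    obtain ⟨y, hy, hyx⟩ := hX x hx a
    rw [← singleton_append, ← append_assoc]
    exact ih (mem_starMul.2 ⟨y, hy, hyx.trans (suffix_append_self_iff.2 hxw)⟩)

end starMul

section Lcs

open List

variable {A : Type*} {k : ℕ} {ρ : Word A k → Word A k → Prop} {u v : Word A k} {x w : List A}

theorem exists_isLcs (u v : List A) : ∃ w, IsLcs u v w := by
  obtain ⟨w, hwu, hwv, hmax⟩ := u.exists_longest_suffix (· <:+ v) nil_suffix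
  exact ⟨w, hwu, hwv, hmax⟩

theorem exists_isLcsClass (hρ : ∀ u, ρ u u) (u : Word A k) : ∃ x, IsLcsClass ρ u x := by
  obtain ⟨x, -, hx, hmax⟩ :=
    u.val.exists_longest_suffix (fun w => ∀ v, ρ u v → w <:+ v.val) fun _ _ => nil_suffix
  exact ⟨x, hx, fun w hw => hmax w (hw u (hρ u)) hw⟩

theorem IsLcsClass.suffix_of_isLcs (hρ : ∀ u, ρ u u) (hx : IsLcsClass ρ u x) (huv : ρ u v)
    (hw : IsLcs u.val v.val w) : x <:+ w :=
  hw.2.2 x (hx.1 u (hρ u)) (hx.1 v huv)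

theorem IsLcsClass.exists_isLcs (hρ : ∀ u, ρ u u) (hx : IsLcsClass ρ u x) :
    ∃ v, ρ u v ∧ IsLcs u.val v.val x := by
  choose lcs hlcs using fun v : Word A k => _root_.exists_isLcs u.val v.val
  obtain ⟨v₀, hv₀, hmin⟩ :=
    (measure fun v => (lcs v).length).wf.has_min {v | ρ u v} ⟨u, hρ u⟩
  have hcommon : ∀ v, ρ u v → lcs v₀ <:+ v.val := fun v hv =>
    (suffix_of_suffix_length_le (hlcs v₀).1 (hlcs v).1 (not_lt.1 (hmin v hv))).trans
      (hlcs v).2.1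
  have hx₀ : x = lcs v₀ :=
    (hx.suffix_of_isLcs hρ hv₀ (hlcs v₀)).eq_of_length_le (hx.2 _ hcommon).length_le
  exact ⟨v₀, hv₀, hx₀ ▸ hlcs v₀⟩

theorem Lam_subset_Lam' (hρ : ∀ u, ρ u u) : Lam ρ ⊆ Lam' ρ := by
  rintro x ⟨u, hx⟩
  obtain ⟨v, huv, hlcs⟩ := hx.exists_isLcs hρ
  exact ⟨u, v, huv, hlcs⟩

theorem exists_mem_Lam_suffix_of_mem_Lam' (hρ : ∀ u, ρ u u) (hw : w ∈ Lam' ρ) :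
    ∃ x ∈ Lam ρ, x <:+ w := by
  obtain ⟨u, v, huv, hlcs⟩ := hw
  obtain ⟨x, hx⟩ := exists_isLcsClass hρ u
  exact ⟨x, ⟨u, hx⟩, hx.suffix_of_isLcs hρ huv hlcs⟩

theorem IsLcsClass.suffix_concat_of_act (hρ : IsRC k ρ) (hx : IsLcsClass ρ u x) (a : A)
    {y : List A} (hy : IsLcsClass ρ (act k a u) y) : y <:+ x ++ [a] := by
  have hact : ∀ v : Word A k, (act k a v).val <:+ v.val ++ [a] := fun v => drop_suffix _ _
  rcases suffix_concat_iff.1 ((hy.1 _ (hρ.1.refl _)).trans (hact u)) with rfl | ⟨t, rfl, -⟩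
  · exact nil_suffix
  · refine suffix_append_self_iff.2 (hx.2 t fun v huv => ?_)
    exact suffix_append_self_iff.1 ((hy.1 _ (hρ.2 u v huv a)).trans (hact v))

theorem exists_mem_Lam_suffix_concat (hρ : IsRC k ρ) (hx : x ∈ Lam ρ) (a : A) :
    ∃ y ∈ Lam ρ, y <:+ x ++ [a] := by
  obtain ⟨u, hx⟩ := hx
  obtain ⟨y, hy⟩ := exists_isLcsClass hρ.1.refl (act k a u)
  exact ⟨y, ⟨_, hy⟩, hx.suffix_concat_of_act hρ a hy⟩

end Lcs

theorem starMul_Lam_ideal_general {A : Type*}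
    (k : ℕ) (ρ : Word A k → Word A k → Prop) (hρ : IsRC k ρ) :
    starMul (Lam ρ) = starMul (Lam' ρ) ∧
    (∀ u v w : List A, w ∈ starMul (Lam ρ) → u ++ w ++ v ∈ starMul (Lam ρ)) ∧
    (∀ w : List A, w.length = k → w ∈ starMul (Lam ρ)) := by
  have hrefl : ∀ u, ρ u u := hρ.1.refl
  refine ⟨?_, fun u v w hw => ?_, fun w hw => ?_⟩
  · refine (starMul_subset_starMul fun x hx => ?_).antisymm
      (starMul_subset_starMul fun w hw => exists_mem_Lam_suffix_of_mem_Lam' hrefl hw)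
    exact ⟨x, Lam_subset_Lam' hrefl hx, List.suffix_refl x⟩
  · exact append_mem_starMul_right (fun x hx => exists_mem_Lam_suffix_concat hρ hx) v
      (append_mem_starMul_left u hw)
  · obtain ⟨x, hx⟩ := exists_isLcsClass hrefl ⟨w, hw⟩
    exact mem_starMul.2 ⟨x, ⟨_, hx⟩, hx.1 _ (hrefl _)⟩

/-- for any right congruence `ρ` on `A^k`, `A*Λ_ρ = A*Λ'_ρ` is a
two-sided ideal of `A*` containing `A^k`. -/
theorem starMul_Lam_ideal {A : Type*} [Fintype A] [Nonempty A]
    (k : ℕ) (hk : 1 ≤ k) (ρ : Word A k → Word A k → Prop) (hρ : IsRC k ρ) :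
    starMul (Lam ρ) = starMul (Lam' ρ) ∧
    (∀ u v w : List A, w ∈ starMul (Lam ρ) → u ++ w ++ v ∈ starMul (Lam ρ)) ∧
    (∀ w : List A, w.length = k → w ∈ starMul (Lam ρ)) :=
  starMul_Lam_ideal_general k ρ hρ
end
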